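/- Let A be a unital Banach algebra contained in a unital Banach algebra B with 1_A possibly ≠ 1_B, such that every element of A accretive in A is accretive in B. If x ∈ A is accretive, then x is invertible in B if and only if the closed subalgebra generated by x contains 1_B, and in this case the support idempotent s(x) equals 1_B. -/

import Mathlib

open MeasureTheory Filter

/-- The fractional power of `x` given by the Balakrishnan representation
`x^α = (sin(απ)/π) ∫₀^∞ t^{α−1} (t+x)⁻¹ x dt`. -/
noncomputable def balPow {B : Type*} [NormedRing B] [NormedSpace ℝ B]
    (x : B) (α : ℝ) : B :=
  (Real.sin (α * Real.pi) / Real.pi) •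
    ∫ t in Set.Ioi (0 : ℝ), t ^ (α - 1) • (Ring.inverse (t • (1 : B) + x) * x)

/-- The `NormedSpace ℂ` structure on a closed non-unital subalgebra, restricted from `B`
(instance search no longer finds it by itself). -/
noncomputable instance nonUnitalSubalgebraNormedSpaceComplex {B : Type*} [NormedRing B]
    [NormedAlgebra ℂ B] (S : NonUnitalSubalgebra ℂ B) : NormedSpace ℂ S :=
  SubmoduleClass.toNormedSpace (R := ℂ) S

/-!
Testing accretivity of `x` against the states `a ↦ f (a b) / ‖b‖` gives
`Re z ‖b‖ ≤ ‖(z + x) b‖`, so `z + x` is invertible with `‖(z + x)⁻¹‖ ≤ 1 / Re z` on the open right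
half-plane. There `z ↦ (z + x)⁻¹ x` is analytic, and it lies in the closed algebra generated by `x`
when `‖z‖ > ‖x‖` (Neumann series); by the identity theorem in the quotient by that closed subspace,
it lies there whenever `Re z > 0`. If `x` is invertible, `(t + x)⁻¹ x → x⁻¹ x = 1` as `t → 0⁺`.
Conversely, an element `x q` of the algebra close to `1` is invertible and `q` commutes with `x`,
so `x` is invertible.

For the roots, split the Balakrishnan integral at `t = 1`. On `(0, 1]`,
`(t + x)⁻¹ x = 1 - t (t + x)⁻¹` with `(t + x)⁻¹` bounded since `x` is invertible, and on `(1, ∞)`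
the integrand is `O(t ^ (α - 2))`. Hence `x ^ α - sinc (απ) • 1 = O(sin (απ))` as `α → 0⁺`.
-/

open Set Topology Real

section

variable {𝕜 B : Type*} [NormedField 𝕜] [NormedRing B] [NormedAlgebra 𝕜 B]

theorem isUnit_smul_one_add_of_norm_lt [NormOneClass B] [CompleteSpace B] {x : B} {z : 𝕜}
    (hz : ‖x‖ < ‖z‖) : IsUnit (z • (1 : B) + x) := by
  have h := spectrum.mem_resolventSet_of_norm_lt (𝕜 := 𝕜) (k := -z)
    (hz.trans_eq (norm_neg z).symm)
  rw [resolventSet, mem_ofPred_eq, Algebra.algebraMap_eq_smul_one] at h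
  simpa [neg_smul, ← neg_add'] using h.neg

theorem continuousAt_inverse_smul_one_add [CompleteSpace B] {x : B} {t : 𝕜}
    (ht : IsUnit (t • (1 : B) + x)) :
    ContinuousAt (fun t : 𝕜 => Ring.inverse (t • (1 : B) + x)) t :=
  (ht.unit_spec ▸ NormedRing.inverse_continuousAt ht.unit).comp
    (f := fun t : 𝕜 => t • (1 : B) + x) (by fun_prop)

theorem continuousOn_inverse_smul_one_add [CompleteSpace B] {x : B} {s : Set 𝕜}
    (hs : ∀ t ∈ s, IsUnit (t • (1 : B) + x)) :
    ContinuousOn (fun t : 𝕜 => Ring.inverse (t • (1 : B) + x)) s := fun t ht =>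
  (continuousAt_inverse_smul_one_add (hs t ht)).continuousWithinAt

theorem exists_commute_mul_eq_of_mem_adjoin_singleton {x p : B}
    (hp : p ∈ NonUnitalAlgebra.adjoin 𝕜 {x}) : ∃ q, Commute x q ∧ x * q = p := by
  induction hp using NonUnitalAlgebra.adjoin_induction with
  | mem y hy =>
    rw [mem_singleton_iff.mp hy]
    exact ⟨1, Commute.one_right x, mul_one x⟩
  | zero => exact ⟨0, Commute.zero_right x, mul_zero x⟩
  | add a b _ _ ha hb =>
    obtain ⟨qa, hqa, rfl⟩ := ha
    obtain ⟨qb, hqb, rfl⟩ := hb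
    exact ⟨qa + qb, hqa.add_right hqb, mul_add x qa qb⟩
  | mul a b _ _ ha hb =>
    obtain ⟨qa, hqa, rfl⟩ := ha
    obtain ⟨qb, hqb, rfl⟩ := hb
    exact ⟨qa * x * qb, (hqa.mul_right (Commute.refl x)).mul_right hqb, by simp only [mul_assoc]⟩
  | smul c a _ ha =>
    obtain ⟨qa, hqa, rfl⟩ := ha
    exact ⟨c • qa, hqa.smul_right c, mul_smul_comm c x qa⟩

theorem isUnit_of_one_mem_closure_adjoin [CompleteSpace B] {x : B}
    (h : (1 : B) ∈ closure (NonUnitalAlgebra.adjoin 𝕜 {x} : Set B)) : IsUnit x := by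
  obtain ⟨p, hp_unit, hp_mem⟩ := mem_closure_iff.mp h _ Units.isOpen isUnit_one
  obtain ⟨q, hxq, rfl⟩ := exists_commute_mul_eq_of_mem_adjoin_singleton hp_mem
  exact (hxq.isUnit_mul_iff.mp hp_unit).1

theorem inverse_smul_one_add_mul_mem_closure_adjoin_of_norm_lt [NormOneClass B] [CompleteSpace B]
    {x : B} {z : 𝕜} (hz : ‖x‖ < ‖z‖) :
    Ring.inverse (z • (1 : B) + x) * x ∈ (NonUnitalAlgebra.adjoin 𝕜 {x}).topologicalClosure := by
  have hz0 : z ≠ 0 := norm_pos_iff.mp ((norm_nonneg x).trans_lt hz)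
  set a : B := -(z⁻¹ • x)
  have ha : ‖a‖ < 1 := by
    rwa [norm_neg, norm_smul, norm_inv, inv_mul_lt_iff₀ ((norm_nonneg x).trans_lt hz), mul_one]
  have hinv : Ring.inverse (z • (1 : B) + x) = z⁻¹ • ∑' n, a ^ n := by
    have hleft : (z⁻¹ • ∑' n, a ^ n) * (z • (1 : B) + x) = 1 :=
      calc (z⁻¹ • ∑' n, a ^ n) * (z • (1 : B) + x) = (∑' n, a ^ n) * (1 - a) := by
            rw [smul_mul_assoc, ← mul_smul_comm]
            simp [a, smul_add, smul_smul, inv_mul_cancel₀ hz0, sub_neg_eq_add]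
        _ = 1 := geom_series_mul_neg a ha
    rw [← Ring.mul_inverse_cancel_right _ (z⁻¹ • ∑' n, a ^ n)
      (isUnit_smul_one_add_of_norm_lt hz), hleft, one_mul]
  have hsum : HasSum (fun n => a ^ n * x) ((∑' n, a ^ n) * x) :=
    (summable_geometric_of_norm_lt_one ha).hasSum.mul_right x
  have hx_mem := NonUnitalAlgebra.self_mem_adjoin_singleton 𝕜 x
  have hterm (n : ℕ) : a ^ n * x ∈ NonUnitalAlgebra.adjoin 𝕜 {x} := by
    induction n with
    | zero => simp
    | succ n ih =>
      rw [pow_succ', mul_assoc]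
      exact mul_mem (neg_mem (SMulMemClass.smul_mem _ hx_mem)) ih
  rw [hinv, smul_mul_assoc]
  refine SMulMemClass.smul_mem _ ((NonUnitalAlgebra.adjoin 𝕜 {x}).isClosed_topologicalClosure
    |>.mem_of_tendsto hsum.tendsto_sum_nat (Eventually.of_forall fun N => ?_))
  exact sum_mem fun n _ => (NonUnitalAlgebra.adjoin 𝕜 {x}).le_topologicalClosure (hterm n)

end

theorem norm_integral_Ioc_rpow_smul_le {E : Type*} [NormedAddCommGroup E] [NormedSpace ℝ E]
    {g : ℝ → E} {K α : ℝ} (hK : ∀ t ∈ Ioc (0 : ℝ) 1, ‖g t‖ ≤ K) (hα : 0 ≤ α) :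
    ‖∫ t in Ioc (0 : ℝ) 1, t ^ α • g t‖ ≤ K := by
  have hK' : ∀ t ∈ Ioc (0 : ℝ) 1, ‖t ^ α • g t‖ ≤ K := by
    intro t ht
    rw [norm_smul, Real.norm_of_nonneg (Real.rpow_nonneg ht.1.le α)]
    calc t ^ α * ‖g t‖ ≤ 1 * K :=
          mul_le_mul (Real.rpow_le_one ht.1.le ht.2 hα) (hK t ht) (norm_nonneg _) zero_le_one
      _ = K := one_mul K
  simpa using norm_setIntegral_le_of_norm_le_const (μ := volume) measure_Ioc_lt_top hK'

def IsAccretive {B : Type*} [NormedRing B] [NormedAlgebra ℂ B] (x : B) : Prop :=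
  ∀ ψ : StrongDual ℂ B, ‖ψ‖ = 1 → ψ 1 = 1 → 0 ≤ (ψ x).re

namespace IsAccretive

variable {B : Type*} [NormedRing B] [NormedAlgebra ℂ B] [NormOneClass B] {x : B} {α : ℝ}

theorem re_mul_norm_le (hx : IsAccretive x) (z : ℂ) (b : B) :
    z.re * ‖b‖ ≤ ‖(z • (1 : B) + x) * b‖ := by
  rcases eq_or_ne b 0 with rfl | hb
  · simp
  have hb' : 0 < ‖b‖ := norm_pos_iff.mpr hb
  obtain ⟨f, hf_norm, hf_b⟩ := exists_dual_vector ℂ b hb'.ne'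
  let ψ : StrongDual ℂ B := (‖b‖⁻¹ : ℂ) • f.comp ((ContinuousLinearMap.mul ℂ B).flip b)
  have hψ_apply (a : B) : ψ a = (‖b‖⁻¹ : ℂ) * f (a * b) := rfl
  have hψ_bound (a : B) : ‖ψ a‖ ≤ ‖a * b‖ / ‖b‖ := by
    rw [hψ_apply, norm_mul, norm_inv, Complex.norm_real, Real.norm_of_nonneg hb'.le,
      inv_mul_eq_div]
    gcongr
    simpa [hf_norm] using f.le_opNorm (a * b)
  have hψ_one : ψ 1 = 1 := by
    rw [hψ_apply, one_mul, hf_b]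
    exact inv_mul_cancel₀ (by exact_mod_cast hb'.ne')
  have hψ_norm : ‖ψ‖ = 1 := by
    refine le_antisymm (ψ.opNorm_le_bound zero_le_one fun a => ?_) ?_
    · calc ‖ψ a‖ ≤ ‖a * b‖ / ‖b‖ := hψ_bound a
        _ ≤ ‖a‖ * ‖b‖ / ‖b‖ := by gcongr; exact norm_mul_le a b
        _ = 1 * ‖a‖ := by field_simp
    · simpa [hψ_one] using ψ.le_opNorm 1
  have hre : z.re ≤ (ψ (z • (1 : B) + x)).re := by
    simpa [hψ_one] using hx ψ hψ_norm hψ_one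
  rw [← le_div_iff₀ hb']
  exact hre.trans ((Complex.re_le_norm _).trans (hψ_bound _))

theorem re_mul_norm_inverse_le (hx : IsAccretive x) {z : ℂ} (hz : IsUnit (z • (1 : B) + x)) :
    z.re * ‖Ring.inverse (z • (1 : B) + x)‖ ≤ 1 := by
  simpa [Ring.mul_inverse_cancel _ hz] using hx.re_mul_norm_le z (Ring.inverse (z • (1 : B) + x))

variable [CompleteSpace B]

/-- Shift `z` far to the right, to `w = z + T`, where `w • 1 + x` is invertible by the Neumann
series; the bound `‖(w • 1 + x)⁻¹‖ ≤ 1 / (Re z + T)` then lets a second Neumann series come back. -/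
theorem isUnit_smul_one_add (hx : IsAccretive x) {z : ℂ} (hz : 0 < z.re) :
    IsUnit (z • (1 : B) + x) := by
  set T : ℝ := ‖x‖ + ‖z‖ + 1
  have hT : 0 < T := by positivity
  set w : ℂ := z + T
  have hw_re : w.re = z.re + T := by simp [w]
  have hw : IsUnit (w • (1 : B) + x) := by
    refine isUnit_smul_one_add_of_norm_lt ?_
    have := norm_sub_norm_le (T : ℂ) (-z)
    simp only [Complex.norm_real, Real.norm_of_nonneg hT.le, norm_neg, sub_neg_eq_add] at this
    rw [add_comm] at this
    linarith
  set R := Ring.inverse (w • (1 : B) + x)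
  have hR := hx.re_mul_norm_inverse_le hw
  have hsmall : ‖(T : ℂ) • R‖ < 1 := by
    rw [hw_re] at hR
    rw [norm_smul, Complex.norm_real, Real.norm_of_nonneg hT.le]
    nlinarith [norm_nonneg R]
  have hfactor : z • (1 : B) + x = (w • (1 : B) + x) * (1 - (T : ℂ) • R) := by
    rw [mul_sub, mul_one, mul_smul_comm, Ring.mul_inverse_cancel _ hw, add_sub_right_comm,
      ← sub_smul, add_sub_cancel_right]
  rw [hfactor]
  exact hw.mul (isUnit_one_sub_of_norm_lt_one hsmall)

theorem norm_inverse_le (hx : IsAccretive x) {z : ℂ} (hz : 0 < z.re) :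
    ‖Ring.inverse (z • (1 : B) + x)‖ ≤ z.re⁻¹ := by
  rw [← one_div, le_div_iff₀ hz, mul_comm]
  exact hx.re_mul_norm_inverse_le (hx.isUnit_smul_one_add hz)

theorem isUnit_real_smul_one_add (hx : IsAccretive x) {t : ℝ} (ht : 0 < t) :
    IsUnit (t • (1 : B) + x) := by
  simpa [Complex.coe_smul] using hx.isUnit_smul_one_add (z := t) (by simpa using ht)

theorem norm_inverse_real_le (hx : IsAccretive x) {t : ℝ} (ht : 0 < t) :
    ‖Ring.inverse (t • (1 : B) + x)‖ ≤ t⁻¹ := by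
  simpa [Complex.coe_smul] using hx.norm_inverse_le (z := t) (by simpa using ht)

theorem isUnit_real_smul_one_add_of_isUnit (hx : IsAccretive x) (hxu : IsUnit x) {t : ℝ}
    (ht : 0 ≤ t) : IsUnit (t • (1 : B) + x) := by
  rcases ht.eq_or_lt with rfl | ht
  · simpa using hxu
  · exact hx.isUnit_real_smul_one_add ht

theorem continuousOn_inverse (hx : IsAccretive x) :
    ContinuousOn (fun t : ℝ => Ring.inverse (t • (1 : B) + x)) (Ioi 0) :=
  continuousOn_inverse_smul_one_add fun _ ht => hx.isUnit_real_smul_one_add ht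

theorem continuousOn_inverse_Icc (hx : IsAccretive x) (hxu : IsUnit x) :
    ContinuousOn (fun t : ℝ => Ring.inverse (t • (1 : B) + x)) (Icc 0 1) :=
  continuousOn_inverse_smul_one_add fun _ ht => hx.isUnit_real_smul_one_add_of_isUnit hxu ht.1

theorem exists_bound_inverse_of_isUnit (hx : IsAccretive x) (hxu : IsUnit x) :
    ∃ K, ∀ t ∈ Icc (0 : ℝ) 1, ‖Ring.inverse (t • (1 : B) + x)‖ ≤ K :=
  isCompact_Icc.exists_bound_of_continuousOn (hx.continuousOn_inverse_Icc hxu)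

theorem inverse_smul_one_add_mul_mem_closure_adjoin (hx : IsAccretive x) {z : ℂ}
    (hz : 0 < z.re) :
    Ring.inverse (z • (1 : B) + x) * x ∈ (NonUnitalAlgebra.adjoin ℂ {x}).topologicalClosure := by
  set M := (NonUnitalAlgebra.adjoin ℂ {x}).topologicalClosure.toSubmodule
  have hM : IsClosed (M : Set B) := (NonUnitalAlgebra.adjoin ℂ {x}).isClosed_topologicalClosure
  set g : ℂ → B ⧸ M := fun z => M.mkQ (Ring.inverse (z • (1 : B) + x) * x)
  have hg : AnalyticOnNhd ℂ g {z | 0 < z.re} := by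
    intro z hz
    have hinv := analyticAt_inverse (𝕜 := ℂ) (hx.isUnit_smul_one_add hz).unit
    rw [IsUnit.unit_spec] at hinv
    have hres : AnalyticAt ℂ (fun w : ℂ => Ring.inverse (w • (1 : B) + x)) z :=
      hinv.comp (f := fun w : ℂ => w • (1 : B) + x)
        ((analyticAt_id.smul analyticAt_const).add analyticAt_const)
    exact M.mkQL.analyticAt _ |>.comp (hres.mul analyticAt_const)
  set z₀ : ℂ := ((‖x‖ + 1 : ℝ) : ℂ)
  have hg_z₀ : g =ᶠ[𝓝 z₀] 0 := by
    have hopen : IsOpen {z : ℂ | ‖x‖ < ‖z‖} := isOpen_lt continuous_const continuous_norm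
    refine Filter.eventually_of_mem (hopen.mem_nhds ?_) fun z hz => ?_
    · rw [mem_ofPred_eq, Complex.norm_real, Real.norm_of_nonneg (by positivity)]
      exact lt_add_one _
    · exact (Submodule.Quotient.mk_eq_zero M).mpr
        (inverse_smul_one_add_mul_mem_closure_adjoin_of_norm_lt hz)
  have := hg.eqOn_zero_of_preconnected_of_eventuallyEq_zero
    (convex_halfSpace_re_gt 0).isPreconnected (by simp [z₀]; positivity) hg_z₀ hz
  exact (Submodule.Quotient.mk_eq_zero M).mp this

theorem one_mem_closure_adjoin (hx : IsAccretive x) (hxu : IsUnit x) :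
    (1 : B) ∈ (NonUnitalAlgebra.adjoin ℂ {x}).topologicalClosure := by
  have hcont : ContinuousAt (fun t : ℝ => Ring.inverse (t • (1 : B) + x) * x) 0 :=
    (continuousAt_inverse_smul_one_add (by simpa using hxu)).mul continuousAt_const
  have hlim : Tendsto (fun t : ℝ => Ring.inverse (t • (1 : B) + x) * x) (𝓝[>] 0) (𝓝 1) := by
    simpa [Ring.inverse_mul_cancel _ hxu] using hcont.tendsto.mono_left nhdsWithin_le_nhds
  refine (NonUnitalAlgebra.adjoin ℂ {x}).isClosed_topologicalClosure.mem_of_tendsto hlim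
    (eventually_nhdsWithin_of_forall fun t (ht : 0 < t) => ?_)
  simpa [Complex.coe_smul] using hx.inverse_smul_one_add_mul_mem_closure_adjoin
    (z := t) (by simpa using ht)

theorem rpow_smul_inverse_mul_eq (hx : IsAccretive x) {t : ℝ} (ht : 0 < t) :
    t ^ (α - 1) • (Ring.inverse (t • (1 : B) + x) * x) =
      t ^ (α - 1) • (1 : B) - t ^ α • Ring.inverse (t • (1 : B) + x) := by
  have h := Ring.inverse_mul_cancel _ (hx.isUnit_real_smul_one_add ht)
  rw [mul_add, mul_smul_comm, mul_one] at h
  rw [eq_sub_of_add_eq' h, smul_sub, smul_smul, Real.rpow_sub_one ht.ne',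
    div_mul_cancel₀ _ ht.ne']

theorem norm_rpow_smul_inverse_mul_le (hx : IsAccretive x) {t : ℝ} (ht : 0 < t) :
    ‖t ^ (α - 1) • (Ring.inverse (t • (1 : B) + x) * x)‖ ≤ ‖x‖ * t ^ (α - 2) := by
  have hR := hx.norm_inverse_real_le ht
  calc ‖t ^ (α - 1) • (Ring.inverse (t • (1 : B) + x) * x)‖
      ≤ t ^ (α - 1) * (t⁻¹ * ‖x‖) := by
        rw [norm_smul, Real.norm_of_nonneg (by positivity)]
        gcongr
        exact (norm_mul_le _ _).trans (by gcongr)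
    _ = ‖x‖ * t ^ (α - 2) := by
        rw [show α - 2 = α - 1 - 1 by ring, Real.rpow_sub_one ht.ne' (α - 1)]
        ring

theorem integrableOn_Ioi_one (hx : IsAccretive x) (hα : α < 1) :
    IntegrableOn (fun t : ℝ => t ^ (α - 1) • (Ring.inverse (t • (1 : B) + x) * x)) (Ioi 1) := by
  refine ((integrableOn_Ioi_rpow_of_lt (a := α - 2) (by linarith) zero_lt_one).const_mul
    ‖x‖).mono' ?_ ?_
  · refine ContinuousOn.aestronglyMeasurable ?_ measurableSet_Ioi
    exact ((continuousOn_id.rpow_const fun t ht => Or.inl (zero_lt_one.trans ht).ne').smul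
      ((hx.continuousOn_inverse.mono (Ioi_subset_Ioi zero_le_one)).mul continuousOn_const))
  · filter_upwards [ae_restrict_mem measurableSet_Ioi] with t ht
    exact hx.norm_rpow_smul_inverse_mul_le (zero_lt_one.trans ht)

theorem norm_integral_Ioi_one_le (hx : IsAccretive x) (hα : α < 1) :
    ‖∫ t in Ioi (1 : ℝ), t ^ (α - 1) • (Ring.inverse (t • (1 : B) + x) * x)‖ ≤ ‖x‖ / (1 - α) := by
  have hint := integrableOn_Ioi_rpow_of_lt (a := α - 2) (by linarith) zero_lt_one
  calc _ ≤ ∫ t in Ioi (1 : ℝ), ‖x‖ * t ^ (α - 2) := by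
        refine norm_integral_le_of_norm_le (hint.const_mul ‖x‖) ?_
        filter_upwards [ae_restrict_mem measurableSet_Ioi] with t ht
        exact hx.norm_rpow_smul_inverse_mul_le (zero_lt_one.trans ht)
    _ = ‖x‖ / (1 - α) := by
        rw [integral_const_mul, integral_Ioi_rpow_of_lt (by linarith) zero_lt_one, Real.one_rpow,
          show α - 2 + 1 = -(1 - α) by ring, div_neg, neg_div, neg_neg, mul_one_div]

theorem integrableOn_rpow_smul_inverse (hx : IsAccretive x) (hxu : IsUnit x) (hα : 0 ≤ α) :
    IntegrableOn (fun t : ℝ => t ^ α • Ring.inverse (t • (1 : B) + x)) (Ioc 0 1) :=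
  ((continuousOn_id.rpow_const fun _ _ => Or.inr hα).smul
    (hx.continuousOn_inverse_Icc hxu)).integrableOn_Icc.mono_set Ioc_subset_Icc_self

theorem integrableOn_Ioc_zero_one (hx : IsAccretive x) (hxu : IsUnit x) (hα : 0 < α) :
    IntegrableOn (fun t : ℝ => t ^ (α - 1) • (Ring.inverse (t • (1 : B) + x) * x)) (Ioc 0 1) := by
  refine IntegrableOn.congr_fun ?_ (fun _ ht => (hx.rpow_smul_inverse_mul_eq ht.1).symm)
    measurableSet_Ioc
  exact ((intervalIntegral.intervalIntegrable_rpow' (by linarith)).1.smul_const (1 : B)).sub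
    (hx.integrableOn_rpow_smul_inverse hxu hα.le)

theorem integral_Ioc_zero_one_eq (hx : IsAccretive x) (hxu : IsUnit x) (hα : 0 < α) :
    ∫ t in Ioc (0 : ℝ) 1, t ^ (α - 1) • (Ring.inverse (t • (1 : B) + x) * x) =
      α⁻¹ • (1 : B) - ∫ t in Ioc (0 : ℝ) 1, t ^ α • Ring.inverse (t • (1 : B) + x) := by
  rw [setIntegral_congr_fun measurableSet_Ioc fun _ ht => hx.rpow_smul_inverse_mul_eq ht.1,
    integral_sub ((intervalIntegral.intervalIntegrable_rpow' (by linarith)).1.smul_const _)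
      (hx.integrableOn_rpow_smul_inverse hxu hα.le),
    integral_smul_const, ← intervalIntegral.integral_of_le zero_le_one,
    integral_rpow (Or.inl (by linarith)), sub_add_cancel, Real.one_rpow, Real.zero_rpow hα.ne',
    sub_zero, one_div]

theorem norm_balPow_sub_sinc_smul_one_le (hx : IsAccretive x) (hxu : IsUnit x) {K : ℝ}
    (hK : ∀ t ∈ Icc (0 : ℝ) 1, ‖Ring.inverse (t • (1 : B) + x)‖ ≤ K) (hα₀ : 0 < α) (hα₁ : α < 1) :
    ‖balPow x α - sinc (α * π) • (1 : B)‖ ≤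
      |sin (α * π)| / π * (K + ‖x‖ / (1 - α)) := by
  set c := sin (α * π) / π
  set E := ∫ t in Ioc (0 : ℝ) 1, t ^ α • Ring.inverse (t • (1 : B) + x)
  set F := ∫ t in Ioi (1 : ℝ), t ^ (α - 1) • (Ring.inverse (t • (1 : B) + x) * x)
  have hsplit : balPow x α = c • ((α⁻¹ • (1 : B) - E) + F) := by
    rw [balPow, ← Ioc_union_Ioi_eq_Ioi zero_le_one, setIntegral_union (Ioc_disjoint_Ioi le_rfl)
      measurableSet_Ioi (hx.integrableOn_Ioc_zero_one hxu hα₀) (hx.integrableOn_Ioi_one hα₁),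
      hx.integral_Ioc_zero_one_eq hxu hα₀]
  have hsinc : sinc (α * π) = c * α⁻¹ := by
    rw [sinc_of_ne_zero (by positivity)]
    simp only [c]
    field_simp
  have hE : ‖E‖ ≤ K := norm_integral_Ioc_rpow_smul_le (fun t ht => hK t (Ioc_subset_Icc_self ht))
    hα₀.le
  calc ‖balPow x α - sinc (α * π) • (1 : B)‖ = |c| * ‖F - E‖ := by
        rw [hsplit, hsinc, ← smul_smul, ← smul_sub, norm_smul, Real.norm_eq_abs]
        congr 2
        abel
    _ ≤ |c| * (K + ‖x‖ / (1 - α)) := by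
        gcongr
        exact (norm_sub_le F E).trans (by linarith [hx.norm_integral_Ioi_one_le hα₁])
    _ = |sin (α * π)| / π * (K + ‖x‖ / (1 - α)) := by
        rw [abs_div, abs_of_pos pi_pos]

theorem tendsto_balPow (hx : IsAccretive x) (hxu : IsUnit x) :
    Tendsto (balPow x) (𝓝[>] 0) (𝓝 1) := by
  obtain ⟨K, hK⟩ := hx.exists_bound_inverse_of_isUnit hxu
  have hsinc : Tendsto (fun α : ℝ => sinc (α * π) • (1 : B)) (𝓝[>] 0) (𝓝 1) := by
    have h : ContinuousAt (fun α : ℝ => sinc (α * π) • (1 : B)) 0 := by fun_prop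
    simpa using h.tendsto.mono_left nhdsWithin_le_nhds
  have hbound : Tendsto (fun α : ℝ => |sin (α * π)| / π * (K + ‖x‖ / (1 - α))) (𝓝[>] 0)
      (𝓝 0) := by
    have h : ContinuousAt (fun α : ℝ => |sin (α * π)| / π * (K + ‖x‖ / (1 - α))) 0 := by
      fun_prop (disch := norm_num)
    simpa using h.tendsto.mono_left nhdsWithin_le_nhds
  have hdiff : Tendsto (fun α => balPow x α - sinc (α * π) • (1 : B)) (𝓝[>] 0) (𝓝 0) := by
    refine squeeze_zero_norm' ?_ hbound
    filter_upwards [Ioo_mem_nhdsGT one_pos] with α hα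
    exact hx.norm_balPow_sub_sinc_smul_one_le hxu hK hα.1 hα.2
  simpa using hdiff.add hsinc

end IsAccretive

theorem invertible_iff_one_mem_closure_adjoin_general
    {B : Type*} [NormedRing B] [NormedAlgebra ℂ B] [NormOneClass B] [CompleteSpace B]
    (S : NonUnitalSubalgebra ℂ B)
    (u : B) (hu : u ∈ S)
    (hacc : ∀ a : S,
      (∀ φ : StrongDual ℂ S, ‖φ‖ = 1 → φ ⟨u, hu⟩ = 1 → 0 ≤ (φ a).re) →
      (∀ ψ : StrongDual ℂ B, ‖ψ‖ = 1 → ψ 1 = 1 → 0 ≤ (ψ (a : B)).re))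
    (x : B) (hxS : x ∈ S)
    (hx : ∀ φ : StrongDual ℂ S, ‖φ‖ = 1 → φ ⟨u, hu⟩ = 1 → 0 ≤ (φ ⟨x, hxS⟩).re) :
    (IsUnit x ↔
      (1 : B) ∈ closure ((NonUnitalAlgebra.adjoin ℂ {x} : NonUnitalSubalgebra ℂ B) : Set B)) ∧
    (IsUnit x →
      Tendsto (fun n : ℕ => balPow x (1 / (n : ℝ))) atTop (nhds (1 : B))) := by
  have hxB : IsAccretive x := hacc ⟨x, hxS⟩ hx
  refine ⟨⟨hxB.one_mem_closure_adjoin, isUnit_of_one_mem_closure_adjoin⟩, fun hxu => ?_⟩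
  have hinv : Tendsto (fun n : ℕ => 1 / (n : ℝ)) atTop (𝓝[>] 0) := by
    refine (tendsto_inv_atTop_nhdsGT_zero.comp tendsto_natCast_atTop_atTop).congr fun n => ?_
    simp
  exact (hxB.tendsto_balPow hxu).comp hinv

/-- Let `A` be a unital Banach algebra (a closed subalgebra `S` of a
unital Banach algebra `B`, with its own unit `u`, possibly `≠ 1_B`) such that every
element of `A` accretive in `A` is accretive in `B`.  If `x ∈ A` is accretive (in `A`),
then `x` is invertible in `B` if and only if the closed subalgebra generated by `x`
contains `1_B`, and in this case the support idempotent `s(x)` equals `1_B` (the roots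
`x^{1/n}` converge in norm to `1_B`). -/
theorem invertible_iff_one_mem_closure_adjoin
    {B : Type*} [NormedRing B] [NormedAlgebra ℂ B] [NormOneClass B] [CompleteSpace B]
    (S : NonUnitalSubalgebra ℂ B) (hSc : IsClosed (S : Set B))
    (u : B) (hu : u ∈ S) (huid : ∀ a ∈ S, u * a = a ∧ a * u = a)
    (hacc : ∀ a : S,
      (∀ φ : StrongDual ℂ S, ‖φ‖ = 1 → φ ⟨u, hu⟩ = 1 → 0 ≤ (φ a).re) →
      (∀ ψ : StrongDual ℂ B, ‖ψ‖ = 1 → ψ 1 = 1 → 0 ≤ (ψ (a : B)).re))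
    (x : B) (hxS : x ∈ S)
    (hx : ∀ φ : StrongDual ℂ S, ‖φ‖ = 1 → φ ⟨u, hu⟩ = 1 → 0 ≤ (φ ⟨x, hxS⟩).re) :
    (IsUnit x ↔
      (1 : B) ∈ closure ((NonUnitalAlgebra.adjoin ℂ {x} : NonUnitalSubalgebra ℂ B) : Set B)) ∧
    (IsUnit x →
      Tendsto (fun n : ℕ => balPow x (1 / (n : ℝ))) atTop (nhds (1 : B))) :=
  invertible_iff_one_mem_closure_adjoin_general S u hu hacc x hxS hx
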